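/- Let B := [[0, −2D],[−2F, 0]] (the (m+k)×(m+k) block matrix 2I − K, where K = [[2I, 2D],[2F, 2I]] is the Cartan matrix). Then the following identity of polynomials in the variable t holds: det((1 + t²)·I − t·B) = det(t²·I − C). In particular, the generating-function matrix M(t) = (1+t²)I − tB of the McKay–Slodowy operator has determinant equal to the characteristic polynomial of the affine Coxeter transformation C evaluated at t². -/

import Mathlib

/-!
Conjugating by `diag(I, x • I)` moves the factor `x` of the lower-left block of
`(1 + x²) • I - x • B` onto the upper-right block; since `x ^ k` can be cancelled in a domain,
`det ((1 + x²) • I - x • B) = det [[(x² + 1) • I, 2x² • D], [2 • F, (x² + 1) • I]]`.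
The row operation `[[I, -2D], [0, I]]`, of determinant one, turns this last matrix into
`x² • I - C`.
-/

open Matrix

section

variable {R : Type*} [CommRing R] {m k : Type*}

def twoSubCartan (d : Matrix m k R) (f : Matrix k m R) : Matrix (m ⊕ k) (m ⊕ k) R :=
  fromBlocks 0 ((-2 : R) • d) ((-2 : R) • f) 0

theorem twoSubCartan_map {S : Type*} [CommRing S] (φ : R →+* S) (d : Matrix m k R)
    (f : Matrix k m R) : (twoSubCartan d f).map φ = twoSubCartan (d.map φ) (f.map φ) := by
  simp only [twoSubCartan, fromBlocks_map]
  congr 1 <;> ext <;> simp [map_ofNat]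

variable [Fintype m] [Fintype k] [DecidableEq m] [DecidableEq k]

def coxeter (d : Matrix m k R) (f : Matrix k m R) : Matrix (m ⊕ k) (m ⊕ k) R :=
  fromBlocks (-1) ((-2 : R) • d) 0 1 * fromBlocks 1 0 ((-2 : R) • f) (-1)

theorem coxeter_map {S : Type*} [CommRing S] (φ : R →+* S) (d : Matrix m k R)
    (f : Matrix k m R) : (coxeter d f).map φ = coxeter (d.map φ) (f.map φ) := by
  simp only [coxeter, Matrix.map_mul, fromBlocks_map]
  congr 2 <;> ext <;> simp [one_apply, apply_ite φ, map_ofNat]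

theorem det_fromBlocks_smul_smul [IsDomain R] (A : Matrix m m R) (B : Matrix m k R)
    (C : Matrix k m R) (D : Matrix k k R) {x : R} (hx : x ≠ 0) (y : R) :
    det (fromBlocks A (y • B) (x • C) D) = det (fromBlocks A ((x * y) • B) C D) := by
  set S : Matrix (m ⊕ k) (m ⊕ k) R := fromBlocks 1 0 0 (x • 1)
  have hconj : fromBlocks A (y • B) (x • C) D * S = S * fromBlocks A ((x * y) • B) C D := by
    simp [S, fromBlocks_multiply, smul_smul]
  have hdetS : det S = x ^ Fintype.card k := by simp [S, det_fromBlocks_zero₂₁]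
  have hdet := congrArg det hconj
  rw [det_mul, det_mul, hdetS, mul_comm] at hdet
  exact mul_left_cancel₀ (pow_ne_zero _ hx) hdet

theorem smul_one_sub_coxeter_eq_mul (t : R) (d : Matrix m k R) (f : Matrix k m R) :
    t • 1 - coxeter d f =
      fromBlocks 1 ((-2 : R) • d) 0 1 *
        fromBlocks ((t + 1) • 1) ((2 * t) • d) ((2 : R) • f) ((t + 1) • 1) := by
  rw [coxeter, ← fromBlocks_one, fromBlocks_smul, fromBlocks_multiply, fromBlocks_multiply,
    sub_eq_add_neg, fromBlocks_neg, fromBlocks_add, fromBlocks_inj]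
  refine ⟨?_, ?_, ?_, ?_⟩ <;>
    simp only [Matrix.mul_one, Matrix.one_mul, Matrix.mul_zero, Matrix.zero_mul, Matrix.mul_neg,
      Matrix.mul_smul, Matrix.smul_mul, smul_zero, zero_add, neg_neg] <;>
    module

theorem det_smul_one_sub_coxeter (t : R) (d : Matrix m k R) (f : Matrix k m R) :
    det (t • 1 - coxeter d f) =
      det (fromBlocks ((t + 1) • 1) ((2 * t) • d) ((2 : R) • f) ((t + 1) • 1)) := by
  rw [smul_one_sub_coxeter_eq_mul, det_mul, det_fromBlocks_zero₂₁, det_one, det_one, one_mul,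
    one_mul]

theorem det_one_add_sq_smul_sub_smul_twoSubCartan [IsDomain R] {x : R} (hx : x ≠ 0)
    (d : Matrix m k R) (f : Matrix k m R) :
    det ((1 + x ^ 2) • 1 - x • twoSubCartan d f) = det (x ^ 2 • 1 - coxeter d f) := by
  have hblocks : (1 + x ^ 2) • 1 - x • twoSubCartan d f =
      fromBlocks ((x ^ 2 + 1) • 1) ((2 * x) • d) (x • (2 : R) • f) ((x ^ 2 + 1) • 1) := by
    rw [twoSubCartan, ← fromBlocks_one, fromBlocks_smul, fromBlocks_smul, sub_eq_add_neg,
      fromBlocks_neg, fromBlocks_add, fromBlocks_inj]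
    refine ⟨?_, ?_, ?_, ?_⟩ <;> simp only [smul_zero, neg_zero, add_zero] <;> module
  rw [hblocks, det_fromBlocks_smul_smul _ _ _ _ hx, det_smul_one_sub_coxeter]
  ring_nf

end

theorem stmt_18_general (m k : ℕ)
    (D : Matrix (Fin m) (Fin k) ℝ) (F : Matrix (Fin k) (Fin m) ℝ)
    (C : Matrix (Fin m ⊕ Fin k) (Fin m ⊕ Fin k) ℝ)
    (hC : C = fromBlocks (-1) ((-2 : ℝ) • D) 0 1 * fromBlocks 1 0 ((-2 : ℝ) • F) (-1))
    (B : Matrix (Fin m ⊕ Fin k) (Fin m ⊕ Fin k) ℝ)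
    (hB : B = fromBlocks 0 ((-2 : ℝ) • D) ((-2 : ℝ) • F) 0) :
    Matrix.det
        (((1 + Polynomial.X ^ 2 : Polynomial ℝ)) • (1 : Matrix (Fin m ⊕ Fin k) (Fin m ⊕ Fin k) (Polynomial ℝ))
          - (Polynomial.X : Polynomial ℝ) • B.map (fun a => Polynomial.C a))
      = Matrix.det
        (((Polynomial.X ^ 2 : Polynomial ℝ)) • (1 : Matrix (Fin m ⊕ Fin k) (Fin m ⊕ Fin k) (Polynomial ℝ))
          - C.map (fun a => Polynomial.C a)) := by
  have hBmap : B.map (fun a => Polynomial.C a) =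
      twoSubCartan (D.map Polynomial.C) (F.map Polynomial.C) := by
    rw [hB]
    exact twoSubCartan_map Polynomial.C D F
  have hCmap : C.map (fun a => Polynomial.C a) =
      coxeter (D.map Polynomial.C) (F.map Polynomial.C) := by
    rw [hC]
    exact coxeter_map Polynomial.C D F
  rw [hBmap, hCmap]
  exact det_one_add_sq_smul_sub_smul_twoSubCartan Polynomial.X_ne_zero _ _

/-- Let `B = [[0, −2D],[−2F, 0]] = 2I − K` (with `K` the Cartan matrix)
and let `C` be the (affine) Coxeter transformation. Then, as polynomials in `t`,
`det((1 + t²)·I − t·B) = det(t²·I − C)`: the determinant of the generating-function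
matrix `M(t)` of the McKay–Slodowy operator equals the characteristic polynomial of the
affine Coxeter transformation evaluated at `t²`. -/
theorem stmt_18 (m k : ℕ) (hm : 0 < m) (hk : 0 < k)
    (D : Matrix (Fin m) (Fin k) ℝ) (F : Matrix (Fin k) (Fin m) ℝ)
    (C : Matrix (Fin m ⊕ Fin k) (Fin m ⊕ Fin k) ℝ)
    (hC : C = fromBlocks (-1) ((-2 : ℝ) • D) 0 1 * fromBlocks 1 0 ((-2 : ℝ) • F) (-1))
    (B : Matrix (Fin m ⊕ Fin k) (Fin m ⊕ Fin k) ℝ)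
    (hB : B = fromBlocks 0 ((-2 : ℝ) • D) ((-2 : ℝ) • F) 0) :
    Matrix.det
        (((1 + Polynomial.X ^ 2 : Polynomial ℝ)) • (1 : Matrix (Fin m ⊕ Fin k) (Fin m ⊕ Fin k) (Polynomial ℝ))
          - (Polynomial.X : Polynomial ℝ) • B.map (fun a => Polynomial.C a))
      = Matrix.det
        (((Polynomial.X ^ 2 : Polynomial ℝ)) • (1 : Matrix (Fin m ⊕ Fin k) (Fin m ⊕ Fin k) (Polynomial ℝ))
          - C.map (fun a => Polynomial.C a)) :=
  stmt_18_general m k D F C hC B hB
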